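/- arXiv:bayes-an/9506002 — 3 statements merged into one kernel-verified Lean document; each statement's English description precedes it below -/
import Mathlib

section
/- Let (Y_k)_{k≥1} be a sequence in a real Hilbert space H such that the inner products ⟪Y_k, Y_l⟫ depend only on |k−l|, and there exist n and a constant c with ⟪Y_k, Y_l⟫ = c for all |k−l| ≥ n. Then the sequence of arithmetic means M_m = (1/m)·Σ_{k=1}^m Y_k is Cauchy in H. -/
open Filter

/-- If `(Y_k)_{k ≥ 1}` in a real inner product space has inner products
depending only on `|k − l|`, and equal to a constant `c` once `|k − l| ≥ n`,
then the arithmetic means `M_m = (1/m) Σ_{k=1}^m Y_k` form a Cauchy sequence. -/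
theorem nstep_means_cauchy {H : Type*} [NormedAddCommGroup H] [InnerProductSpace ℝ H]
    (Y : ℕ → H) (n : ℕ) (d : ℕ → ℝ) (c : ℝ)
    (h : ∀ k l, 1 ≤ k → 1 ≤ l →
      (inner ℝ (Y k) (Y l) : ℝ) =
        if Nat.dist k l < n then d (Nat.dist k l) else c) :
    CauchySeq (fun m : ℕ => (m : ℝ)⁻¹ • ∑ k ∈ Finset.Icc 1 m, Y k) := by
  classical
  set M : ℕ → H := fun m => (m : ℝ)⁻¹ • ∑ k ∈ Finset.Icc 1 m, Y k with hM
  set B : ℝ := ∑ i ∈ Finset.range n, |d i - c| with hB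
  have hB0 : 0 ≤ B := Finset.sum_nonneg fun _ _ => abs_nonneg _
  set C : ℝ := (2 * n + 1) * B with hC
  have hC0 : 0 ≤ C := by positivity
  set e : ℕ → ℕ → ℝ := fun k l => if Nat.dist k l < n then d (Nat.dist k l) - c else 0 with he
  have he_abs : ∀ k l, |e k l| ≤ B := by
    intro k l
    simp only [he]
    split_ifs with hd
    · exact Finset.single_le_sum (f := fun i => |d i - c|)
        (fun i _ => abs_nonneg _) (Finset.mem_range.mpr hd)
    · simpa using hB0
  -- bound on the inner double sum of e
  have inner_sum_bound : ∀ (k q : ℕ), ∑ l ∈ Finset.Icc 1 q, |e k l| ≤ C := by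
    intro k q
    have hzero : ∀ l ∈ Finset.Icc 1 q, e k l ≠ 0 → Nat.dist k l < n := by
      intro l _ hne
      by_contra hge
      simp [he, hge] at hne
    have hsum : ∑ l ∈ Finset.Icc 1 q, |e k l|
        = ∑ l ∈ (Finset.Icc 1 q).filter (fun l => Nat.dist k l < n), |e k l| := by
      refine (Finset.sum_filter_of_ne ?_).symm
      intro l hl hne
      exact hzero l hl (fun h0 => hne (by simp [h0]))
    rw [hsum]
    calc ∑ l ∈ (Finset.Icc 1 q).filter (fun l => Nat.dist k l < n), |e k l|
        ≤ ∑ _l ∈ (Finset.Icc 1 q).filter (fun l => Nat.dist k l < n), B :=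
          Finset.sum_le_sum fun l _ => he_abs k l
      _ = ((Finset.Icc 1 q).filter (fun l => Nat.dist k l < n)).card * B := by
          simp [mul_comm]
      _ ≤ (2 * n + 1) * B := by
          apply mul_le_mul_of_nonneg_right _ hB0
          have hsub : (Finset.Icc 1 q).filter (fun l => Nat.dist k l < n)
              ⊆ Finset.Icc (k - n) (k + n) := by
            intro l hl
            have := (Finset.mem_filter.mp hl).2
            simp only [Nat.dist] at this
            simp only [Finset.mem_Icc]
            omega
          have hcard := Finset.card_le_card hsub
          have : (Finset.Icc (k - n) (k + n)).card ≤ 2 * n + 1 := by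
            rw [Nat.card_Icc]; omega
          have : ((Finset.Icc 1 q).filter (fun l => Nat.dist k l < n)).card ≤ 2 * n + 1 :=
            le_trans hcard this
          exact_mod_cast this
  -- key estimate
  have key : ∀ p q : ℕ, 1 ≤ p → 1 ≤ q → |(inner ℝ (M p) (M q) : ℝ) - c| ≤ C / q := by
    intro p q hp hq
    have hp0 : (p : ℝ) ≠ 0 := Nat.cast_ne_zero.mpr (by omega)
    have hq0 : (q : ℝ) ≠ 0 := Nat.cast_ne_zero.mpr (by omega)
    have expand : (inner ℝ (M p) (M q) : ℝ)
        = (p : ℝ)⁻¹ * ((q : ℝ)⁻¹ *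
            ∑ k ∈ Finset.Icc 1 p, ∑ l ∈ Finset.Icc 1 q, (inner ℝ (Y k) (Y l) : ℝ)) := by
      simp only [hM, real_inner_smul_left, real_inner_smul_right, sum_inner, inner_sum]
      rw [← Finset.mul_sum, Finset.sum_comm]
      ring
    have hterm : ∀ k ∈ Finset.Icc 1 p, ∀ l ∈ Finset.Icc 1 q,
        (inner ℝ (Y k) (Y l) : ℝ) = c + e k l := by
      intro k hk l hl
      rw [h k l (Finset.mem_Icc.mp hk).1 (Finset.mem_Icc.mp hl).1]
      simp only [he]
      split_ifs <;> ring
    have hsum : ∑ k ∈ Finset.Icc 1 p, ∑ l ∈ Finset.Icc 1 q, (inner ℝ (Y k) (Y l) : ℝ)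
        = (p : ℝ) * q * c + ∑ k ∈ Finset.Icc 1 p, ∑ l ∈ Finset.Icc 1 q, e k l := by
      rw [Finset.sum_congr rfl fun k hk =>
        Finset.sum_congr rfl fun l hl => hterm k hk l hl]
      have step : ∀ k, ∑ l ∈ Finset.Icc 1 q, (c + e k l)
          = (q : ℝ) * c + ∑ l ∈ Finset.Icc 1 q, e k l := by
        intro k
        rw [Finset.sum_add_distrib, Finset.sum_const, Nat.card_Icc, nsmul_eq_mul]
        simp
      rw [Finset.sum_congr rfl fun k _ => step k, Finset.sum_add_distrib,
        Finset.sum_const, Nat.card_Icc, nsmul_eq_mul]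
      simp only [Nat.add_sub_cancel]
      try ring
    have hE : |∑ k ∈ Finset.Icc 1 p, ∑ l ∈ Finset.Icc 1 q, e k l| ≤ p * C := by
      calc |∑ k ∈ Finset.Icc 1 p, ∑ l ∈ Finset.Icc 1 q, e k l|
          ≤ ∑ k ∈ Finset.Icc 1 p, |∑ l ∈ Finset.Icc 1 q, e k l| :=
            Finset.abs_sum_le_sum_abs _ _
        _ ≤ ∑ k ∈ Finset.Icc 1 p, ∑ l ∈ Finset.Icc 1 q, |e k l| :=
            Finset.sum_le_sum fun k _ => Finset.abs_sum_le_sum_abs _ _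
        _ ≤ ∑ _k ∈ Finset.Icc 1 p, C := Finset.sum_le_sum fun k _ => inner_sum_bound k q
        _ = p * C := by simp [Nat.card_Icc, mul_comm]
    have hdiff : (inner ℝ (M p) (M q) : ℝ) - c
        = (p : ℝ)⁻¹ * (q : ℝ)⁻¹ * ∑ k ∈ Finset.Icc 1 p, ∑ l ∈ Finset.Icc 1 q, e k l := by
      rw [expand, hsum]
      field_simp
      try ring
    rw [hdiff, abs_mul, abs_mul, abs_inv, abs_inv, Nat.abs_cast, Nat.abs_cast]
    calc (p : ℝ)⁻¹ * (q : ℝ)⁻¹ * |∑ k ∈ Finset.Icc 1 p, ∑ l ∈ Finset.Icc 1 q, e k l|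
        ≤ (p : ℝ)⁻¹ * (q : ℝ)⁻¹ * (p * C) := by
          apply mul_le_mul_of_nonneg_left hE
          positivity
      _ = C / q := by field_simp
  -- squared distance bound
  have sq_bound : ∀ N p q : ℕ, 1 ≤ N → N ≤ p → N ≤ q →
      ‖M p - M q‖ ^ 2 ≤ 4 * C / N := by
    intro N p q hN hNp hNq
    have hp : 1 ≤ p := le_trans hN hNp
    have hq : 1 ≤ q := le_trans hN hNq
    have hNpos : (0 : ℝ) < N := by exact_mod_cast hN
    have hCN : ∀ m : ℕ, N ≤ m → C / m ≤ C / N := by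
      intro m hm
      have hm' : (N : ℝ) ≤ m := by exact_mod_cast hm
      have : (m : ℝ)⁻¹ ≤ (N : ℝ)⁻¹ := inv_anti₀ hNpos hm'
      calc C / m = C * (m : ℝ)⁻¹ := by rw [div_eq_mul_inv]
        _ ≤ C * (N : ℝ)⁻¹ := mul_le_mul_of_nonneg_left this hC0
        _ = C / N := by rw [div_eq_mul_inv]
    have ha := key p p hp hp
    have hb := key p q hp hq
    have hc2 := key q q hq hq
    have ha' : |(inner ℝ (M p) (M p) : ℝ) - c| ≤ C / N := le_trans ha (hCN p hNp)
    have hb' : |(inner ℝ (M p) (M q) : ℝ) - c| ≤ C / N := le_trans hb (hCN q hNq)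
    have hc2' : |(inner ℝ (M q) (M q) : ℝ) - c| ≤ C / N := le_trans hc2 (hCN q hNq)
    have hnorm : ‖M p - M q‖ ^ 2
        = ((inner ℝ (M p) (M p) : ℝ) - c) - 2 * ((inner ℝ (M p) (M q) : ℝ) - c)
          + ((inner ℝ (M q) (M q) : ℝ) - c) := by
      rw [@norm_sub_sq_real, ← real_inner_self_eq_norm_sq, ← real_inner_self_eq_norm_sq]
      ring
    have h1 := abs_le.mp ha'
    have h2 := abs_le.mp hb'
    have h3 := abs_le.mp hc2'
    rw [hnorm]
    have : 4 * C / N = 4 * (C / N) := by ring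
    rw [this]
    linarith [h1.2, h2.1, h3.2]
  -- conclude Cauchy
  rw [Metric.cauchySeq_iff]
  intro ε hε
  obtain ⟨N0, hN0⟩ := exists_nat_gt (4 * C / ε ^ 2)
  refine ⟨N0 + 1, fun p hp q hq => ?_⟩
  have hN1 : 1 ≤ N0 + 1 := by omega
  have hNpos : (0 : ℝ) < (N0 + 1 : ℕ) := by positivity
  have hsq := sq_bound (N0 + 1) p q hN1 hp hq
  have hlt : 4 * C / (N0 + 1 : ℕ) < ε ^ 2 := by
    rw [div_lt_iff₀ hNpos]
    have h4C : 4 * C < (N0 + 1 : ℕ) * ε ^ 2 := by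
      have : 4 * C / ε ^ 2 < (N0 + 1 : ℕ) := by
        push_cast
        nlinarith
      calc 4 * C = (4 * C / ε ^ 2) * ε ^ 2 := by field_simp
        _ < (N0 + 1 : ℕ) * ε ^ 2 := by
          apply mul_lt_mul_of_pos_right this (by positivity)
    linarith
  have hlt2 : ‖M p - M q‖ ^ 2 < ε ^ 2 := lt_of_le_of_lt hsq hlt
  have : ‖M p - M q‖ < ε := lt_of_pow_lt_pow_left₀ 2 hε.le hlt2
  simpa [dist_eq_norm, hM] using this
end

section
/- Let (Y_k)_{k≥1} be an n-step exchangeable sequence in a real Hilbert space H with ⟪Y_k, Y_l⟫ = c for |k−l| ≥ n, and let M be the norm limit of the arithmetic means (1/m)·Σ_{k=1}^m Y_k. Then ⟪M, M⟫ = c and ⟪M, Y_k⟫ = c for every k. -/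
open Filter

/-- If `(Y_k)_{k ≥ 1}` is `n`-step exchangeable with tail inner product `c`, and
`M` is the norm limit of the arithmetic means, then `⟪M, M⟫ = c` and
`⟪M, Y_k⟫ = c` for every `k ≥ 1`. -/
theorem nstep_mean_inner {H : Type*} [NormedAddCommGroup H] [InnerProductSpace ℝ H]
    [CompleteSpace H]
    (Y : ℕ → H) (n : ℕ) (d : ℕ → ℝ) (c : ℝ)
    (h : ∀ k l, 1 ≤ k → 1 ≤ l →
      (inner ℝ (Y k) (Y l) : ℝ) =
        if Nat.dist k l < n then d (Nat.dist k l) else c)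
    (M : H)
    (hM : Tendsto (fun m : ℕ => (m : ℝ)⁻¹ • ∑ k ∈ Finset.Icc 1 m, Y k)
      atTop (nhds M)) :
    (inner ℝ M M : ℝ) = c ∧ ∀ k, 1 ≤ k → (inner ℝ M (Y k) : ℝ) = c := by
  have h2 : ∀ k, 1 ≤ k → (inner ℝ M (Y k) : ℝ) = c := by
    intro k hk
    have hf : Tendsto (fun j : ℕ => (inner ℝ (Y (1 + j)) (Y k) : ℝ)) atTop (nhds c) := by
      apply tendsto_atTop_of_eventually_const (i₀ := k + n)
      intro j hj
      rw [h (1 + j) k (by omega) hk, if_neg]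
      simp only [Nat.dist]
      omega
    have hc := hf.cesaro
    have heq : ∀ m : ℕ,
        ((m : ℝ)⁻¹ * ∑ i ∈ Finset.range m, (inner ℝ (Y (1 + i)) (Y k) : ℝ))
          = (inner ℝ ((m : ℝ)⁻¹ • ∑ j ∈ Finset.Icc 1 m, Y j) (Y k) : ℝ) := by
      intro m
      rw [real_inner_smul_left, sum_inner]
      congr 1
      rw [← Finset.Ico_add_one_right_eq_Icc, Finset.sum_Ico_eq_sum_range]
      simp [add_comm]
    have h1 : Tendsto (fun m : ℕ =>
        (inner ℝ ((m : ℝ)⁻¹ • ∑ j ∈ Finset.Icc 1 m, Y j) (Y k) : ℝ))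
        atTop (nhds (inner ℝ M (Y k))) := hM.inner tendsto_const_nhds
    exact tendsto_nhds_unique h1 (hc.congr heq)
  refine ⟨?_, h2⟩
  have h1 : Tendsto (fun m : ℕ =>
      (inner ℝ M ((m : ℝ)⁻¹ • ∑ j ∈ Finset.Icc 1 m, Y j) : ℝ))
      atTop (nhds (inner ℝ M M)) := tendsto_const_nhds.inner hM
  have h3 : Tendsto (fun m : ℕ =>
      (inner ℝ M ((m : ℝ)⁻¹ • ∑ j ∈ Finset.Icc 1 m, Y j) : ℝ))
      atTop (nhds c) := by
    apply Tendsto.congr' _ (tendsto_const_nhds (x := c))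
    filter_upwards [Ici_mem_atTop 1] with m hm
    have hmpos : (0 : ℝ) < m := by exact_mod_cast Nat.lt_of_lt_of_le Nat.zero_lt_one hm
    rw [real_inner_smul_right, inner_sum]
    rw [Finset.sum_congr rfl fun j hj => h2 j (Finset.mem_Icc.mp hj).1]
    rw [Finset.sum_const, Nat.card_Icc]
    simp only [Nat.add_sub_cancel, nsmul_eq_mul]
    field_simp
  exact tendsto_nhds_unique h1 h3
end

section
/- Let (Y_k)_{k≥1} be an n-step exchangeable sequence in a real Hilbert space with constant tail covariance c (⟪Y_k,Y_l⟫ = c for |k−l| ≥ n), M the limit of arithmetic means, and R_k = Y_k − M. Then ⟪R_k, R_l⟫ = ⟪Y_k, Y_l⟫ − c for all k, l; in particular ⟪R_k, R_l⟫ = 0 whenever |k−l| ≥ n, and ⟪M, R_k⟫ = 0 for all k. -/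
open Filter

private lemma cesaro_const (f : ℕ → ℝ) (c : ℝ) (N : ℕ) (hf : ∀ l, N ≤ l → f l = c) :
    Tendsto (fun m : ℕ => (m : ℝ)⁻¹ * ∑ l ∈ Finset.Icc 1 m, f l) atTop (nhds c) := by
  have h0 : Tendsto (fun m : ℕ => (m : ℝ)⁻¹ * (∑ l ∈ Finset.Icc 1 N, (f l - c)) + c)
      atTop (nhds c) := by
    have := (tendsto_inv_atTop_nhds_zero_nat.mul_const
      (∑ l ∈ Finset.Icc 1 N, (f l - c))).add_const c
    simpa using this
  refine Tendsto.congr' ?_ h0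
  filter_upwards [eventually_ge_atTop (max N 1)] with m hm
  have hmN : N ≤ m := le_trans (le_max_left _ _) hm
  have hm1 : 1 ≤ m := le_trans (le_max_right _ _) hm
  have hm0 : (m : ℝ) ≠ 0 := by positivity
  have hsum : ∑ l ∈ Finset.Icc 1 m, (f l - c) = ∑ l ∈ Finset.Icc 1 N, (f l - c) := by
    rw [← Finset.sum_subset (Finset.Icc_subset_Icc_right hmN)]
    intro x hx hx'
    simp only [Finset.mem_Icc, not_and, not_le] at hx hx'
    rw [hf x (le_of_lt (hx' hx.1)), sub_self]
  have : ∑ l ∈ Finset.Icc 1 m, f l = (∑ l ∈ Finset.Icc 1 N, (f l - c)) + m * c := by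
    rw [← hsum]
    rw [Finset.sum_sub_distrib, Finset.sum_const, Nat.card_Icc]
    push_cast [hm1]
    ring
  rw [this, mul_add, mul_comm (m:ℝ) c, ← mul_assoc, mul_comm ((m:ℝ)⁻¹) c, mul_assoc,
    inv_mul_cancel₀ hm0, mul_one]

/-- With `R_k = Y_k − M` for an `n`-step exchangeable sequence with tail
inner product `c` and mean limit `M`: `⟪R_k, R_l⟫ = ⟪Y_k, Y_l⟫ − c` for all
`k, l ≥ 1`; in particular `⟪R_k, R_l⟫ = 0` whenever `|k − l| ≥ n`, and
`⟪M, R_k⟫ = 0` for all `k ≥ 1`. -/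
theorem nstep_residual_inner {H : Type*} [NormedAddCommGroup H] [InnerProductSpace ℝ H]
    [CompleteSpace H]
    (Y : ℕ → H) (n : ℕ) (d : ℕ → ℝ) (c : ℝ)
    (h : ∀ k l, 1 ≤ k → 1 ≤ l →
      (inner ℝ (Y k) (Y l) : ℝ) =
        if Nat.dist k l < n then d (Nat.dist k l) else c)
    (M : H)
    (hM : Tendsto (fun m : ℕ => (m : ℝ)⁻¹ • ∑ k ∈ Finset.Icc 1 m, Y k)
      atTop (nhds M)) :
    (∀ k l, 1 ≤ k → 1 ≤ l →
      (inner ℝ (Y k - M) (Y l - M) : ℝ) = (inner ℝ (Y k) (Y l) : ℝ) - c) ∧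
    (∀ k l, 1 ≤ k → 1 ≤ l → n ≤ Nat.dist k l →
      (inner ℝ (Y k - M) (Y l - M) : ℝ) = 0) ∧
    (∀ k, 1 ≤ k → (inner ℝ M (Y k - M) : ℝ) = 0) := by
  -- For any x, inner x M = lim m⁻¹ * ∑ inner x (Y l)
  have key : ∀ x : H, Tendsto (fun m : ℕ => (m : ℝ)⁻¹ * ∑ l ∈ Finset.Icc 1 m,
      (inner ℝ x (Y l) : ℝ)) atTop (nhds (inner ℝ x M : ℝ)) := by
    intro x
    have := Filter.Tendsto.inner (𝕜 := ℝ) (tendsto_const_nhds (x := x)) hM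
    refine this.congr fun m => ?_
    simp [inner_smul_right, inner_sum, real_inner_smul_right]
  have hYM : ∀ k, 1 ≤ k → (inner ℝ (Y k) M : ℝ) = c := by
    intro k hk
    refine tendsto_nhds_unique (key (Y k)) (cesaro_const _ _ (k + n) ?_)
    intro l hl
    have h1l : 1 ≤ l := le_trans (le_trans hk (Nat.le_add_right _ _)) hl
    rw [h k l hk h1l, if_neg]
    rw [Nat.dist_eq_max_sub_min]
    omega
  have hMM : (inner ℝ M M : ℝ) = c := by
    refine tendsto_nhds_unique (key M) (cesaro_const _ _ 1 ?_)
    intro l hl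
    rw [real_inner_comm]
    exact hYM l hl
  have hMY : ∀ k, 1 ≤ k → (inner ℝ M (Y k) : ℝ) = c := fun k hk => by
    rw [real_inner_comm]; exact hYM k hk
  have main : ∀ k l, 1 ≤ k → 1 ≤ l →
      (inner ℝ (Y k - M) (Y l - M) : ℝ) = (inner ℝ (Y k) (Y l) : ℝ) - c := by
    intro k l hk hl
    simp only [inner_sub_left, inner_sub_right]
    rw [hYM k hk, hMY l hl, hMM]
    ring
  refine ⟨main, fun k l hk hl hd => ?_, fun k hk => ?_⟩
  · rw [main k l hk hl, h k l hk hl, if_neg (not_lt.mpr hd), sub_self]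
  · rw [inner_sub_right, hMY k hk, hMM, sub_self]
end
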